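/- arXiv:1908.09494 — 2 statements merged into one kernel-verified Lean document; each statement's English description precedes it below -/
import Mathlib

section
/- Let M be the limit of a weak Fraïssé class in a finite relational signature. If M is ω-categorical, then M is model-complete, i.e., whenever N ⊆ N' are two models of Th(M), N is an elementary substructure of N'. -/
open FirstOrder FirstOrder.Language Set CategoryTheory

namespace WeakFraisse

/-- A class of (bundled) structures has the weak amalgamation property WAP. -/
def HasWAPClass (L : FirstOrder.Language) (K : Set (Bundled.{0} L.Structure)) : Prop :=
  ∀ A, A ∈ K → ∃ A', A' ∈ K ∧ ∃ τ : A ↪[L] A',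
    ∀ B₁, B₁ ∈ K → ∀ B₂, B₂ ∈ K → ∀ (φ₁ : A' ↪[L] B₁) (φ₂ : A' ↪[L] B₂),
      ∃ C, C ∈ K ∧ ∃ (ψ₁ : B₁ ↪[L] C) (ψ₂ : B₂ ↪[L] C),
        (ψ₁.comp φ₁).comp τ = (ψ₂.comp φ₂).comp τ

/-- A weak Fraïssé class: a nonempty class of finitely generated structures, countable
up to isomorphism, with the hereditary property, the joint embedding property and the
weak amalgamation property. -/
def IsWeakFraisseClass (L : FirstOrder.Language) (K : Set (Bundled.{0} L.Structure)) : Prop :=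
  K.Nonempty ∧
  (∀ A : Bundled.{0} L.Structure, A ∈ K → Structure.FG L A) ∧
  (∃ f : ℕ → Bundled.{0} L.Structure, ∀ A ∈ K, ∃ n, Nonempty (A ≃[L] f n)) ∧
  Hereditary K ∧ JointEmbedding K ∧ HasWAPClass L K

/-- `M` is the (Krawczyk–Kubiś) limit of the weak Fraïssé class `K`: it is countable,
has age `K`, and is weakly homogeneous: every finitely generated substructure `A` of
`M` is contained in a finitely generated substructure `B` such that every `C ∈ K`
extending `B` admits an embedding into `M` which is the identity on `A`. -/
def IsWeakFraisseLimit (L : FirstOrder.Language) (K : Set (Bundled.{0} L.Structure))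
    (M : Type) [L.Structure M] : Prop :=
  Countable M ∧ L.age M = K ∧
    ∀ A : L.Substructure M, A.FG →
      ∃ B : L.Substructure M, B.FG ∧ ∃ hAB : A ≤ B,
        ∀ C : Bundled.{0} L.Structure, C ∈ K → ∀ g : B ↪[L] C,
          ∃ h : C ↪[L] M, ∀ (a : M) (ha : a ∈ A), h (g ⟨a, hAB ha⟩) = a

/-- A theory is ω-categorical if all its countable models are isomorphic. -/
def OmegaCategorical (L : FirstOrder.Language) (T : L.Theory) : Prop :=
  ∀ (N₁ N₂ : Type) [L.Structure N₁] [L.Structure N₂],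
    Countable N₁ → Countable N₂ → N₁ ⊨ T → N₂ ⊨ T → Nonempty (N₁ ≃[L] N₂)

/-- A theory is model complete if every embedding between its models is elementary. -/
def ModelComplete (L : FirstOrder.Language) (T : L.Theory) : Prop :=
  ∀ (N N' : Type) [L.Structure N] [L.Structure N'],
    N ⊨ T → N' ⊨ T → ∀ f : N ↪[L] N', ∀ (n : ℕ) (φ : L.Formula (Fin n)) (x : Fin n → N),
      φ.Realize ((f : N → N') ∘ x) ↔ φ.Realize x

end WeakFraisse

/-!
By Löwenheim–Skolem and ω-categoricity, an embedding between models of `Th(M)` is, on each finite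
tuple, conjugate to a self-embedding `g` of `M`; so it suffices that self-embeddings of `M` are
elementary. We show that `g` agrees on each finite tuple with an automorphism of `M`, obtained by
back-and-forth over the partial isomorphisms `f` of `M` lying below an embedding of a *witness*
of `dom f`: a finitely generated `W ⊇ dom f` all of whose extensions in `K` re-embed into `M` over
`dom f`, as provided by the limit property. Re-embedding along such an embedding `v` retracts
`v(W)` onto `dom f`, which makes this class closed under inverses and under enlarging the range.
-/

namespace WeakFraisse

open FirstOrder.Language.Substructure FirstOrder.Language.PartialEquiv

section PartialEquiv

variable {L : Language} {M N : Type*} [L.Structure M] [L.Structure N]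

theorem exists_equiv_of_forth_of_back [Countable M] [Countable N] (P : Set (M ≃ₚ[L] N))
    {f₀ : M ≃ₚ[L] N} (hf₀ : f₀ ∈ P) (forth : ∀ f ∈ P, ∀ m : M, ∃ g ∈ P, f ≤ g ∧ m ∈ g.dom)
    (back : ∀ f ∈ P, ∀ n : N, ∃ g ∈ P, f ≤ g ∧ n ∈ g.cod) :
    ∃ σ : M ≃[L] N, ∀ x : f₀.dom, σ x = f₀.toEquiv x := by
  have := Encodable.ofCountable M
  have := Encodable.ofCountable N
  let D : M ⊕ N → Order.Cofinal P
    | .inl m => ⟨{f | m ∈ f.1.dom}, fun f => by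
        obtain ⟨g, hg, hfg, hm⟩ := forth f.1 f.2 m
        exact ⟨⟨g, hg⟩, hm, hfg⟩⟩
    | .inr n => ⟨{f | n ∈ f.1.cod}, fun f => by
        obtain ⟨g, hg, hfg, hn⟩ := back f.1 f.2 n
        exact ⟨⟨g, hg⟩, hn, hfg⟩⟩
  let S : ℕ →o M ≃ₚ[L] N := ⟨Subtype.val ∘ Order.sequenceOfCofinals ⟨f₀, hf₀⟩ D,
    (Subtype.mono_coe _).comp (Order.sequenceOfCofinals.monotone _ _)⟩
  have dom_top : (DirectLimit.partialEquivLimit S).dom = ⊤ :=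
    eq_top_iff.2 fun m _ => dom_le_dom (DirectLimit.le_partialEquivLimit S _)
      (Order.sequenceOfCofinals.encode_mem _ D (.inl m))
  have cod_top : (DirectLimit.partialEquivLimit S).cod = ⊤ :=
    eq_top_iff.2 fun n _ => cod_le_cod (DirectLimit.le_partialEquivLimit S _)
      (Order.sequenceOfCofinals.encode_mem _ D (.inr n))
  refine ⟨toEquivOfEqTop dom_top cod_top, fun x => ?_⟩
  have hle : f₀ ≤ (toEquivOfEqTop dom_top cod_top).toEmbedding.toPartialEquiv := by
    convert! DirectLimit.le_partialEquivLimit S 0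
    rw [toEquivOfEqTop_toEmbedding, Embedding.toPartialEquiv_toEmbedding]
  exact congrArg Subtype.val (toEquiv_inclusion_apply hle x)

noncomputable def partialEquivOfEmbedding {W : L.Substructure M} (g : W ↪[L] N) :
    M ≃ₚ[L] N :=
  ⟨W, g.toHom.range, g.equivRange⟩

theorem le_partialEquivOfEmbedding_iff {f : M ≃ₚ[L] N} {W : L.Substructure M}
    {g : W ↪[L] N} :
    f ≤ partialEquivOfEmbedding g ↔
      ∃ h : f.dom ≤ W, ∀ x : f.dom, g (Substructure.inclusion h x) = f.toEquiv x := by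
  refine ⟨fun hf => ⟨dom_le_dom hf, fun x => ?_⟩, fun ⟨h, hg⟩ => ⟨h, ?_⟩⟩
  · exact congrArg Subtype.val (toEquiv_inclusion_apply hf x)
  · ext x
    exact hg x

theorem symm_le_partialEquivOfEmbedding {f : M ≃ₚ[L] N} {V : L.Substructure M}
    {v : V ↪[L] N} (hfv : f ≤ partialEquivOfEmbedding v) {E : L.Substructure N} (u : E ↪[L] M)
    (hvE : ∀ z, v z ∈ E) (hu : ∀ z : V, (z : M) ∈ f.dom → u ⟨v z, hvE z⟩ = z) :
    f.symm ≤ partialEquivOfEmbedding u := by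
  obtain ⟨hV, hv⟩ := le_partialEquivOfEmbedding_iff.1 hfv
  have hcod : ∀ y : f.cod, (y : N) = v (Substructure.inclusion hV (f.toEquiv.symm y)) := by
    intro y
    rw [hv, f.toEquiv.apply_symm_apply]
  refine le_partialEquivOfEmbedding_iff.2 ⟨fun y hy => ?_, fun y => ?_⟩
  · simpa only [← hcod ⟨y, hy⟩] using
      hvE (Substructure.inclusion hV (f.toEquiv.symm ⟨y, hy⟩))
  · calc u (Substructure.inclusion _ y)
        _ = u ⟨v _, hvE _⟩ := congrArg u (Subtype.ext (hcod y))
        _ = _ := hu _ (f.toEquiv.symm y).2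

end PartialEquiv

section Limit

variable {L : Language} {K : Set (Bundled.{0} L.Structure)} {M : Type} [L.Structure M]

def IsWitness (K : Set (Bundled.{0} L.Structure)) (A B : L.Substructure M) : Prop :=
  B.FG ∧ ∀ C ∈ K, ∀ g : B ↪[L] C, ∃ h : C ↪[L] M, ∀ z : B, (z : M) ∈ A → h (g z) = z

theorem IsWitness.mono {A A' B : L.Substructure M} (h : IsWitness K A B) (hA' : A' ≤ A) :
    IsWitness K A' B :=
  ⟨h.1, fun C hC g => (h.2 C hC g).imp fun _ hh z hz => hh z (hA' hz)⟩

theorem IsWeakFraisseLimit.exists_isWitness (hM : IsWeakFraisseLimit L K M)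
    {A : L.Substructure M} (hA : A.FG) : ∃ B, A ≤ B ∧ IsWitness K A B := by
  obtain ⟨B, hB, hAB, hext⟩ := hM.2.2 A hA
  exact ⟨B, hAB, hB, fun C hC g => (hext C hC g).imp fun _ hh z hz => hh z hz⟩

theorem IsWitness.exists_retraction (hM : IsWeakFraisseLimit L K M) {A W : L.Substructure M}
    (hW : IsWitness K A W) (e : W ↪[L] M) {E : L.Substructure M} (hE : E.FG)
    (heE : ∀ z, e z ∈ E) : ∃ h : E ↪[L] M, ∀ z : W, (z : M) ∈ A → h ⟨e z, heE z⟩ = z :=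
  hW.2 (Bundled.mk E) (hM.2.1 ▸ age.fg_substructure hE) (e.codRestrict E heE)

def ExtendsOverWitness (K : Set (Bundled.{0} L.Structure)) (f : M ≃ₚ[L] M) : Prop :=
  ∃ (W : L.Substructure M) (g : W ↪[L] M), IsWitness K f.dom W ∧ f ≤ partialEquivOfEmbedding g

theorem ExtendsOverWitness.symm (hM : IsWeakFraisseLimit L K M) {f : M ≃ₚ[L] M}
    (hf : ExtendsOverWitness K f) : ExtendsOverWitness K f.symm := by
  obtain ⟨V, v, hV, hfv⟩ := hf
  obtain ⟨U, hvU, hU⟩ :=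
    hM.exists_isWitness (Structure.FG.range ((fg_iff_structure_fg V).1 hV.1) v.toHom)
  have hvU : ∀ z, v z ∈ U := fun z => hvU (Hom.mem_range.2 ⟨z, rfl⟩)
  obtain ⟨u, hu⟩ := hV.exists_retraction hM v hU.1 hvU
  exact ⟨U, u, hU.mono (cod_le_cod hfv), symm_le_partialEquivOfEmbedding hfv u hvU hu⟩

theorem ExtendsOverWitness.exists_le_mem_cod (hM : IsWeakFraisseLimit L K M)
    {f : M ≃ₚ[L] M} (hf : ExtendsOverWitness K f) (m : M) :
    ∃ g, ExtendsOverWitness K g ∧ f ≤ g ∧ m ∈ g.cod := by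
  obtain ⟨V, v, hV, hfv⟩ := hf
  obtain ⟨W, hAW, hW⟩ := hM.exists_isWitness
    ((Structure.FG.range ((fg_iff_structure_fg V).1 hV.1) v.toHom).sup (fg_closure_singleton m))
  have hvW : ∀ z, v z ∈ W := fun z =>
    hAW (SetLike.le_def.1 le_sup_left (Hom.mem_range.2 ⟨z, rfl⟩))
  -- `h` retracts `W ⊇ v(V) ∪ {m}` onto `dom f` along `v`, so its inverse extends `f`.
  obtain ⟨h, hh⟩ := hV.exists_retraction hM v hW.1 hvW
  have hg : ExtendsOverWitness K ((partialEquivOfEmbedding h).domRestrict hAW) :=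
    ⟨W, h, hW, domRestrict_le _ _⟩
  have hfg : f.symm ≤ (partialEquivOfEmbedding h).domRestrict hAW :=
    le_domRestrict _ _ ((cod_le_cod hfv).trans le_sup_left) hAW
      (symm_le_partialEquivOfEmbedding hfv h hvW hh)
  exact ⟨_, hg.symm hM, symm_le_iff.1 hfg, SetLike.le_def.1 le_sup_right (subset_closure rfl)⟩

theorem ExtendsOverWitness.exists_le_mem_dom (hM : IsWeakFraisseLimit L K M)
    {f : M ≃ₚ[L] M} (hf : ExtendsOverWitness K f) (m : M) :
    ∃ g, ExtendsOverWitness K g ∧ f ≤ g ∧ m ∈ g.dom := by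
  obtain ⟨g, hg, hfg, hm⟩ := (hf.symm hM).exists_le_mem_cod hM m
  exact ⟨g.symm, hg.symm hM, symm_le_iff.1 hfg, hm⟩

theorem ExtendsOverWitness.exists_equiv (hM : IsWeakFraisseLimit L K M) {f : M ≃ₚ[L] M}
    (hf : ExtendsOverWitness K f) : ∃ σ : M ≃[L] M, ∀ x : f.dom, σ x = f.toEquiv x :=
  have := hM.1
  exists_equiv_of_forth_of_back {f | ExtendsOverWitness K f} hf
    (fun _ hf m => hf.exists_le_mem_dom hM m) (fun _ hf m => hf.exists_le_mem_cod hM m)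

theorem IsWeakFraisseLimit.realize_embedding_comp_iff (hM : IsWeakFraisseLimit L K M)
    (g : M ↪[L] M) {n : ℕ} (φ : L.Formula (Fin n)) (t : Fin n → M) :
    φ.Realize (g ∘ t) ↔ φ.Realize t := by
  obtain ⟨W, hAW, hW⟩ := hM.exists_isWitness (fg_closure (Set.finite_range t))
  obtain ⟨σ, hσ⟩ := ExtendsOverWitness.exists_equiv hM
    (⟨W, _, hW, domRestrict_le _ _⟩ :
      ExtendsOverWitness K ((partialEquivOfEmbedding (g.comp W.subtype)).domRestrict hAW))
  have hgσ : g ∘ t = σ ∘ t := funext fun i => (hσ ⟨t i, subset_closure ⟨i, rfl⟩⟩).symm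
  rw [hgσ, StrongHomClass.realize_formula]

end Limit

section ModelCompleteness

variable {L : Language} {M : Type} [L.Structure M]

theorem exists_countable_elementarySubstructure [Countable L.Symbols] {N : Type}
    [L.Structure N] {s : Set N} (hs : s.Countable) :
    ∃ S : L.ElementarySubstructure N, s ⊆ S ∧ Countable S := by
  by_cases hN : Countable N
  · exact ⟨⊤, fun x _ => ElementarySubstructure.mem_top x, inferInstance⟩
  have : Infinite N := not_finite_iff_infinite.1 fun _ => hN inferInstance
  obtain ⟨S, hsS, hS⟩ := exists_elementarySubstructure_card_eq L s Cardinal.aleph0.{0} le_rfl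
    (by simpa using Cardinal.mk_le_aleph0_iff.2 hs.to_subtype)
    (by rw [Cardinal.lift_aleph0, Cardinal.lift_le_aleph0]; exact Cardinal.mk_le_aleph0)
    (by simp)
  exact ⟨S, hsS, Cardinal.mk_le_aleph0_iff.1 (by simpa using hS.le)⟩

theorem OmegaCategorical.realize_embedding_comp_iff [Countable M]
    (hcat : OmegaCategorical L (L.completeTheory M))
    (hM : ∀ (g : M ↪[L] M) {n : ℕ} (φ : L.Formula (Fin n)) (t : Fin n → M),
      φ.Realize (g ∘ t) ↔ φ.Realize t)
    {A B : Type} [L.Structure A] [L.Structure B] [Countable A] [Countable B]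
    (hA : A ⊨ L.completeTheory M) (hB : B ⊨ L.completeTheory M) (e : A ↪[L] B) {n : ℕ}
    (φ : L.Formula (Fin n)) (x : Fin n → A) : φ.Realize (e ∘ x) ↔ φ.Realize x := by
  obtain ⟨i⟩ := hcat A M ‹_› ‹_› hA inferInstance
  obtain ⟨j⟩ := hcat B M ‹_› ‹_› hB inferInstance
  calc φ.Realize (e ∘ x) ↔ φ.Realize (j ∘ e ∘ x) := (StrongHomClass.realize_formula j φ).symm
    _ ↔ φ.Realize (i ∘ x) := by
      simpa [Function.comp_def] using
        hM ((j.toEmbedding.comp e).comp i.symm.toEmbedding) φ (i ∘ x)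
    _ ↔ φ.Realize x := StrongHomClass.realize_formula i φ

theorem OmegaCategorical.modelComplete [Countable L.Symbols] [Countable M]
    (hcat : OmegaCategorical L (L.completeTheory M))
    (hM : ∀ (g : M ↪[L] M) {n : ℕ} (φ : L.Formula (Fin n)) (t : Fin n → M),
      φ.Realize (g ∘ t) ↔ φ.Realize t) :
    ModelComplete L (L.completeTheory M) := by
  intro N N' _ _ hN hN' f n φ x
  obtain ⟨S, hxS, _⟩ := exists_countable_elementarySubstructure (L := L) (countable_range x)
  obtain ⟨S', hfS', _⟩ := exists_countable_elementarySubstructure (L := L)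
    (countable_range fun z : S => f z)
  let f₀ : S ↪[L] S' :=
    (f.comp (S : L.Substructure N).subtype).codRestrict S' fun z => hfS' ⟨z, rfl⟩
  let x₀ : Fin n → S := fun i => ⟨x i, hxS ⟨i, rfl⟩⟩
  calc φ.Realize (f ∘ x) ↔ φ.Realize (f₀ ∘ x₀) := S'.isElementary φ (f₀ ∘ x₀)
    _ ↔ φ.Realize x₀ := hcat.realize_embedding_comp_iff hM
      ((S.theory_model_iff _).2 hN) ((S'.theory_model_iff _).2 hN') f₀ φ x₀
    _ ↔ φ.Realize x := (S.isElementary φ x₀).symm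

end ModelCompleteness

theorem limit_omegaCategorical_modelComplete_general {L : FirstOrder.Language}
    [Finite L.Symbols] {K : Set (Bundled.{0} L.Structure)} {M : Type} [L.Structure M]
    (hM : IsWeakFraisseLimit L K M)
    (hcat : OmegaCategorical L (L.completeTheory M)) :
    ModelComplete L (L.completeTheory M) :=
  have := hM.1
  hcat.modelComplete fun g _ => hM.realize_embedding_comp_iff g

/-- **Corollary (co:ModCom).**  Let `M` be the limit of a weak Fraïssé class in a
finite relational signature.  If `M` is ω-categorical, then `M` is model complete. -/
theorem limit_omegaCategorical_modelComplete {L : FirstOrder.Language} [L.IsRelational]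
    [Finite L.Symbols] {K : Set (Bundled.{0} L.Structure)} {M : Type} [L.Structure M]
    (hK : IsWeakFraisseClass L K) (hM : IsWeakFraisseLimit L K M)
    (hcat : OmegaCategorical L (L.completeTheory M)) :
    ModelComplete L (L.completeTheory M) :=
  limit_omegaCategorical_modelComplete_general hM hcat

end WeakFraisse
end

section
/- For every N ∈ ℕ ∪ {ℵ₀} with N ≥ 2, the class of partial bp-automorphisms of Ury^≺_N has strong JEP: for any two partial bp-automorphisms p_0, p_1 of Ury^≺_N there exist a partial bp-automorphism r of Ury^≺_N and embeddings ψ_i : p_i → r (i = 0,1) whose images are disjoint. -/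
open Metric Set

namespace BPUry

/-- `S` is a ball (an open ball of positive radius) in the metric space `X`. -/
def IsBall {X : Type*} [MetricSpace X] (S : Set X) : Prop :=
  ∃ (x : X) (r : ℝ), 0 < r ∧ S = Metric.ball x r

/-- The linear order `≤`/`<` on `X` is convex with respect to the ultrametric. -/
def ConvexOrder (X : Type*) [MetricSpace X] [LinearOrder X] : Prop :=
  ∀ x y z : X, x < y → y < z → dist x y ≤ dist x z

/-- All distances in `X` are rational. -/
def RationalDist (X : Type*) [MetricSpace X] : Prop :=
  ∀ x y : X, ∃ q : ℚ, dist x y = (q : ℝ)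

/-- Every `r`-polygon in `X` (a set whose distinct points are pairwise at distance `r`)
has size at most `N`. -/
def PolyBound (X : Type*) [MetricSpace X] (N : ℕ∞) : Prop :=
  ∀ (P : Finset X) (r : ℝ), 0 < r → (∀ x ∈ P, ∀ y ∈ P, x ≠ y → dist x y = r) →
    (P.card : ℕ∞) ≤ N

/-- `zdef p = dom p ∪ rng p` for a finite partial map given by its graph. -/
def zdefF {X : Type*} (p : Finset (X × X)) : Set X :=
  {x | (∃ y, (x, y) ∈ p) ∨ ∃ y, (y, x) ∈ p}

/-- `p` (a finite set of pairs) is the graph of a partial bp-automorphism of the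
ordered ultrametric space `X`: a partial bijection between finite subsets of `X` which
is order preserving and preserves the relation `d(x,y) < d(y,z)` (equivalently, maps
balls onto balls). -/
def IsPBP {X : Type*} [MetricSpace X] [LinearOrder X] (p : Finset (X × X)) : Prop :=
  (∀ a ∈ p, ∀ b ∈ p, ((a : X × X).1 = (b : X × X).1 ↔ (a : X × X).2 = (b : X × X).2)) ∧
  (∀ a ∈ p, ∀ b ∈ p, ((a : X × X).1 < (b : X × X).1 ↔ (a : X × X).2 < (b : X × X).2)) ∧
  (∀ a ∈ p, ∀ b ∈ p, ∀ c ∈ p,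
    (dist (a : X × X).1 (b : X × X).1 < dist (b : X × X).1 (c : X × X).1 ↔
     dist (a : X × X).2 (b : X × X).2 < dist (b : X × X).2 (c : X × X).2))

/-- `Φ` is an order-preserving bp-automorphism of `X`. -/
def IsOPBP {X : Type*} [MetricSpace X] [LinearOrder X] (Φ : Equiv.Perm X) : Prop :=
  StrictMono (Φ : X → X) ∧ ∀ S : Set X, IsBall S → IsBall ((Φ : X → X) '' S)

/-- `X` is ultrahomogeneous: every partial (order-preserving) bp-automorphism extends
to an order-preserving bp-automorphism of `X`. -/
def UltraHomog (X : Type*) [MetricSpace X] [LinearOrder X] : Prop :=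
  ∀ p : Finset (X × X), IsPBP p →
    ∃ Φ : Equiv.Perm X, IsOPBP Φ ∧ ∀ a ∈ p, Φ (a : X × X).1 = (a : X × X).2

/-- `X` contains a copy (via an order-preserving bp-injection) of every finite convexly
ordered ultrametric space with rational distances all of whose polygons have size at
most `N`. -/
def UryUniversal (X : Type*) [MetricSpace X] [LinearOrder X] (N : ℕ∞) : Prop :=
  ∀ (n : ℕ) (d : Fin n → Fin n → ℚ),
    (∀ i, d i i = 0) → (∀ i j, d i j = d j i) → (∀ i j, i ≠ j → 0 < d i j) →
    (∀ i j k, d i k ≤ max (d i j) (d j k)) →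
    (∀ i j k, i < j → j < k → d i j ≤ d i k) →
    (∀ (P : Finset (Fin n)) (r : ℚ), 0 < r →
      (∀ i ∈ P, ∀ j ∈ P, i ≠ j → d i j = r) → (P.card : ℕ∞) ≤ N) →
    ∃ f : Fin n → X, StrictMono f ∧
      ∀ i j k, d i j < d j k ↔ dist (f i) (f j) < dist (f j) (f k)

/-- `X` is (an isomorphic copy of) the ordered rational `N`-ultrametric Urysohn space
`Ury^≺_N`: the countable, convexly ordered, rational-valued ultrametric space with
polygons of size at most `N` which is ultrahomogeneous and universal for the class
`K^≺_N`. -/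
def IsUrysohn (X : Type*) [MetricSpace X] [LinearOrder X] (N : ℕ∞) : Prop :=
  Countable X ∧ ConvexOrder X ∧ RationalDist X ∧ PolyBound X N ∧
    UltraHomog X ∧ UryUniversal X N

/-- `Φ` witnesses an embedding of the partial bp-automorphism `p` into the partial
bp-automorphism `q`: `Φ` is a (globally defined, by extendability) order-preserving
bp-automorphism with `Φ ∘ p ⊆ q ∘ Φ`. -/
def EmbedsPBP {X : Type*} [MetricSpace X] [LinearOrder X] (Φ : Equiv.Perm X)
    (p q : Finset (X × X)) : Prop :=
  IsOPBP Φ ∧ ∀ a ∈ p, (Φ (a : X × X).1, Φ (a : X × X).2) ∈ q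

end BPUry

namespace BPUry



variable {X : Type} [LinearOrder X]

/-- Enumeration of `A₀` followed by `A₁`. -/
def auxE (A₀ A₁ : Finset X) (i : Fin (A₀.card + A₁.card)) : X :=
  if h : (i : ℕ) < A₀.card then (A₀.orderIsoOfFin rfl ⟨i, h⟩ : X)
  else (A₁.orderIsoOfFin rfl ⟨(i : ℕ) - A₀.card, by have := i.isLt; omega⟩ : X)

lemma auxE_pos (A₀ A₁ : Finset X) (i : Fin (A₀.card + A₁.card)) (h : (i : ℕ) < A₀.card) :
    auxE A₀ A₁ i = (A₀.orderIsoOfFin rfl ⟨i, h⟩ : X) := dif_pos h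

lemma auxE_neg (A₀ A₁ : Finset X) (i : Fin (A₀.card + A₁.card)) (h : ¬ (i : ℕ) < A₀.card) :
    auxE A₀ A₁ i =
      (A₁.orderIsoOfFin rfl ⟨(i : ℕ) - A₀.card, by have := i.isLt; omega⟩ : X) := dif_neg h

lemma auxE_mem₀ (A₀ A₁ : Finset X) (i : Fin (A₀.card + A₁.card)) (h : (i : ℕ) < A₀.card) :
    auxE A₀ A₁ i ∈ A₀ := by rw [auxE_pos A₀ A₁ i h]; exact Subtype.coe_prop _

lemma auxE_mem₁ (A₀ A₁ : Finset X) (i : Fin (A₀.card + A₁.card)) (h : ¬ (i : ℕ) < A₀.card) :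
    auxE A₀ A₁ i ∈ A₁ := by rw [auxE_neg A₀ A₁ i h]; exact Subtype.coe_prop _

lemma auxE_lt_iff₀ (A₀ A₁ : Finset X) (i j : Fin (A₀.card + A₁.card))
    (hi : (i : ℕ) < A₀.card) (hj : (j : ℕ) < A₀.card) :
    auxE A₀ A₁ i < auxE A₀ A₁ j ↔ i < j := by
  rw [auxE_pos A₀ A₁ i hi, auxE_pos A₀ A₁ j hj, Subtype.coe_lt_coe,
    OrderIso.lt_iff_lt]
  exact Iff.rfl

lemma auxE_lt_iff₁ (A₀ A₁ : Finset X) (i j : Fin (A₀.card + A₁.card))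
    (hi : ¬ (i : ℕ) < A₀.card) (hj : ¬ (j : ℕ) < A₀.card) :
    auxE A₀ A₁ i < auxE A₀ A₁ j ↔ i < j := by
  rw [auxE_neg A₀ A₁ i hi, auxE_neg A₀ A₁ j hj, Subtype.coe_lt_coe,
    OrderIso.lt_iff_lt]
  simp only [Fin.lt_def]
  omega

lemma auxE_inj (A₀ A₁ : Finset X) (i j : Fin (A₀.card + A₁.card))
    (hc : ((i : ℕ) < A₀.card ↔ (j : ℕ) < A₀.card)) (h : auxE A₀ A₁ i = auxE A₀ A₁ j) :
    i = j := by
  rcases lt_trichotomy i j with h' | h' | h'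
  · by_cases hi : (i : ℕ) < A₀.card
    · exact absurd h (ne_of_lt ((auxE_lt_iff₀ A₀ A₁ i j hi (hc.mp hi)).mpr h'))
    · exact absurd h (ne_of_lt ((auxE_lt_iff₁ A₀ A₁ i j hi (fun hj => hi (hc.mpr hj))).mpr h'))
  · exact h'
  · by_cases hj : (j : ℕ) < A₀.card
    · exact absurd h.symm (ne_of_lt ((auxE_lt_iff₀ A₀ A₁ j i hj (hc.mpr hj)).mpr h'))
    · exact absurd h.symm
        (ne_of_lt ((auxE_lt_iff₁ A₀ A₁ j i hj (fun hi => hj (hc.mp hi))).mpr h'))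

/-- Index of an element of `A₀`. -/
def auxI₀ (A₀ A₁ : Finset X) (x : {y // y ∈ A₀}) : Fin (A₀.card + A₁.card) :=
  ⟨(((A₀.orderIsoOfFin rfl).symm x : Fin A₀.card) : ℕ), by
    have := ((A₀.orderIsoOfFin rfl).symm x).isLt; omega⟩

lemma auxI₀_lt (A₀ A₁ : Finset X) (x : {y // y ∈ A₀}) : ((auxI₀ A₀ A₁ x : ℕ)) < A₀.card :=
  ((A₀.orderIsoOfFin rfl).symm x).isLt

lemma auxE_auxI₀ (A₀ A₁ : Finset X) (x : {y // y ∈ A₀}) :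
    auxE A₀ A₁ (auxI₀ A₀ A₁ x) = (x : X) := by
  rw [auxE_pos A₀ A₁ _ (auxI₀_lt A₀ A₁ x)]
  have h3 : ∀ pf : ((auxI₀ A₀ A₁ x : ℕ)) < A₀.card,
      ((A₀.orderIsoOfFin rfl) (⟨(auxI₀ A₀ A₁ x : ℕ), pf⟩ : Fin A₀.card) : X) = x := by
    intro pf
    have h4 : (⟨(auxI₀ A₀ A₁ x : ℕ), pf⟩ : Fin A₀.card) = (A₀.orderIsoOfFin rfl).symm x := by
      apply Fin.ext; rfl
    rw [h4, OrderIso.apply_symm_apply]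
  exact h3 _

/-- Index of an element of `A₁`. -/
def auxI₁ (A₀ A₁ : Finset X) (x : {y // y ∈ A₁}) : Fin (A₀.card + A₁.card) :=
  ⟨A₀.card + (((A₁.orderIsoOfFin rfl).symm x : Fin A₁.card) : ℕ), by
    have := ((A₁.orderIsoOfFin rfl).symm x).isLt; omega⟩

lemma auxI₁_ge (A₀ A₁ : Finset X) (x : {y // y ∈ A₁}) : ¬ ((auxI₁ A₀ A₁ x : ℕ)) < A₀.card := by
  simp [auxI₁]

lemma auxE_auxI₁ (A₀ A₁ : Finset X) (x : {y // y ∈ A₁}) :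
    auxE A₀ A₁ (auxI₁ A₀ A₁ x) = (x : X) := by
  rw [auxE_neg A₀ A₁ _ (auxI₁_ge A₀ A₁ x)]
  have h3 : ∀ pf : ((auxI₁ A₀ A₁ x : ℕ)) - A₀.card < A₁.card,
      ((A₁.orderIsoOfFin rfl) (⟨(auxI₁ A₀ A₁ x : ℕ) - A₀.card, pf⟩ : Fin A₁.card) : X) = x := by
    intro pf
    have h4 : (⟨(auxI₁ A₀ A₁ x : ℕ) - A₀.card, pf⟩ : Fin A₁.card) =
        (A₁.orderIsoOfFin rfl).symm x := by
      apply Fin.ext; simp [auxI₁]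
    rw [h4, OrderIso.apply_symm_apply]
  exact h3 _

/-- The combined distance function. -/
def auxD (Q : X → X → ℚ) (s : ℚ) (A₀ A₁ : Finset X)
    (i j : Fin (A₀.card + A₁.card)) : ℚ :=
  if ((i : ℕ) < A₀.card ↔ (j : ℕ) < A₀.card) then Q (auxE A₀ A₁ i) (auxE A₀ A₁ j) else s

lemma auxD_same (Q : X → X → ℚ) (s : ℚ) (A₀ A₁ : Finset X)
    (i j : Fin (A₀.card + A₁.card)) (h : ((i : ℕ) < A₀.card ↔ (j : ℕ) < A₀.card)) :
    auxD Q s A₀ A₁ i j = Q (auxE A₀ A₁ i) (auxE A₀ A₁ j) := if_pos h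

lemma auxD_cross (Q : X → X → ℚ) (s : ℚ) (A₀ A₁ : Finset X)
    (i j : Fin (A₀.card + A₁.card)) (h : ¬ ((i : ℕ) < A₀.card ↔ (j : ℕ) < A₀.card)) :
    auxD Q s A₀ A₁ i j = s := if_neg h



open Finset in
/-- **Proposition (pr:JEP).**  For every `N ∈ ℕ ∪ {ℵ₀}` with `N ≥ 2`, the class of
partial bp-automorphisms of `Ury^≺_N` has strong JEP: any two partial
bp-automorphisms embed into a common one with disjoint images. -/
theorem partial_bp_strong_JEP (N : ℕ∞) (hN : 2 ≤ N) (X : Type) [MetricSpace X]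
    [IsUltrametricDist X] [LinearOrder X] (hX : IsUrysohn X N) :
    ∀ p₀ p₁ : Finset (X × X), IsPBP p₀ → IsPBP p₁ →
      ∃ r : Finset (X × X), IsPBP r ∧
        ∃ Φ₀ Φ₁ : Equiv.Perm X, EmbedsPBP Φ₀ p₀ r ∧ EmbedsPBP Φ₁ p₁ r ∧
          Disjoint ((Φ₀ : X → X) '' zdefF p₀) ((Φ₁ : X → X) '' zdefF p₁) := by
  classical
  intro p₀ p₁ hp₀ hp₁
  obtain ⟨-, hconv, hrat, hpoly, hhom, huniv⟩ := hX
  choose Q hQ using hrat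
  -- basic facts about the rational distance function
  have hQlt : ∀ x y u v : X, Q x y < Q u v ↔ dist x y < dist u v := by
    intro x y u v; rw [← Rat.cast_lt (K := ℝ), ← hQ, ← hQ]
  have hQle : ∀ x y u v : X, Q x y ≤ Q u v ↔ dist x y ≤ dist u v := by
    intro x y u v; rw [← Rat.cast_le (K := ℝ), ← hQ, ← hQ]
  have hQ0 : ∀ x : X, Q x x = 0 := by
    intro x
    have h : ((Q x x : ℚ) : ℝ) = ((0 : ℚ) : ℝ) := by rw [← hQ]; simp
    exact_mod_cast h
  have hQsymm : ∀ x y : X, Q x y = Q y x := by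
    intro x y
    have h : ((Q x y : ℚ) : ℝ) = ((Q y x : ℚ) : ℝ) := by rw [← hQ, ← hQ, dist_comm]
    exact_mod_cast h
  have hQpos : ∀ x y : X, x ≠ y → 0 < Q x y := by
    intro x y h
    have h2 : ((0 : ℚ) : ℝ) < ((Q x y : ℚ) : ℝ) := by
      rw [← hQ]; simpa using dist_pos.mpr h
    exact_mod_cast h2
  have hQmax : ∀ x y z : X, Q x z ≤ max (Q x y) (Q y z) := by
    intro x y z
    have h := IsUltrametricDist.dist_triangle_max x y z
    rw [hQ, hQ, hQ] at h
    have h2 : ((Q x z : ℚ) : ℝ) ≤ ((max (Q x y) (Q y z) : ℚ) : ℝ) := by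
      push_cast; exact h
    exact_mod_cast h2
  -- supports
  set A₀ : Finset X := p₀.image Prod.fst ∪ p₀.image Prod.snd with hA₀def
  set A₁ : Finset X := p₁.image Prod.fst ∪ p₁.image Prod.snd with hA₁def
  have hmemA₀ : ∀ a ∈ p₀, a.1 ∈ A₀ ∧ a.2 ∈ A₀ := by
    intro a ha
    exact ⟨Finset.mem_union_left _ (Finset.mem_image_of_mem _ ha),
      Finset.mem_union_right _ (Finset.mem_image_of_mem _ ha)⟩
  have hmemA₁ : ∀ a ∈ p₁, a.1 ∈ A₁ ∧ a.2 ∈ A₁ := by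
    intro a ha
    exact ⟨Finset.mem_union_left _ (Finset.mem_image_of_mem _ ha),
      Finset.mem_union_right _ (Finset.mem_image_of_mem _ ha)⟩
  set A : Finset X := A₀ ∪ A₁ with hAdef
  set M : Finset ℚ := insert (0 : ℚ) ((A ×ˢ A).image fun z => Q z.1 z.2) with hMdef
  have hM0 : (0 : ℚ) ∈ M := Finset.mem_insert_self _ _
  set s : ℚ := M.max' ⟨0, hM0⟩ + 1 with hsdef
  have hsA : ∀ x ∈ A, ∀ y ∈ A, Q x y < s := by
    intro x hx y hy
    have hmem : Q x y ∈ M := by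
      rw [hMdef]
      exact Finset.mem_insert_of_mem (Finset.mem_image.mpr
        ⟨(x, y), Finset.mem_product.mpr ⟨hx, hy⟩, rfl⟩)
    have h : Q x y ≤ M.max' ⟨0, hM0⟩ := Finset.le_max' M _ hmem
    rw [hsdef]; linarith
  have hs0 : 0 < s := by
    have h : (0 : ℚ) ≤ M.max' ⟨0, hM0⟩ := Finset.le_max' _ _ hM0
    rw [hsdef]; linarith
  have hEA : ∀ i : Fin (A₀.card + A₁.card), auxE A₀ A₁ i ∈ A := by
    intro i
    by_cases h : (i : ℕ) < A₀.card
    · exact Finset.mem_union_left _ (auxE_mem₀ A₀ A₁ i h)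
    · exact Finset.mem_union_right _ (auxE_mem₁ A₀ A₁ i h)
  have hdlts : ∀ i j : Fin (A₀.card + A₁.card),
      ((i : ℕ) < A₀.card ↔ (j : ℕ) < A₀.card) → auxD Q s A₀ A₁ i j < s := by
    intro i j h
    rw [auxD_same Q s A₀ A₁ i j h]
    exact hsA _ (hEA i) _ (hEA j)
  -- hypotheses for universality
  have hd1 : ∀ i, auxD Q s A₀ A₁ i i = 0 := by
    intro i; rw [auxD_same Q s A₀ A₁ i i Iff.rfl, hQ0]
  have hd2 : ∀ i j, auxD Q s A₀ A₁ i j = auxD Q s A₀ A₁ j i := by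
    intro i j
    by_cases h : ((i : ℕ) < A₀.card ↔ (j : ℕ) < A₀.card)
    · rw [auxD_same Q s A₀ A₁ i j h, auxD_same Q s A₀ A₁ j i h.symm, hQsymm]
    · rw [auxD_cross Q s A₀ A₁ i j h, auxD_cross Q s A₀ A₁ j i (fun h2 => h h2.symm)]
  have hd3 : ∀ i j, i ≠ j → 0 < auxD Q s A₀ A₁ i j := by
    intro i j hij
    by_cases h : ((i : ℕ) < A₀.card ↔ (j : ℕ) < A₀.card)
    · rw [auxD_same Q s A₀ A₁ i j h]
      exact hQpos _ _ (fun he => hij (auxE_inj A₀ A₁ i j h he))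
    · rw [auxD_cross Q s A₀ A₁ i j h]; exact hs0
  have hd4 : ∀ i j k, auxD Q s A₀ A₁ i k ≤
      max (auxD Q s A₀ A₁ i j) (auxD Q s A₀ A₁ j k) := by
    intro i j k
    by_cases hik : ((i : ℕ) < A₀.card ↔ (k : ℕ) < A₀.card)
    · by_cases hij : ((i : ℕ) < A₀.card ↔ (j : ℕ) < A₀.card)
      · have hjk : ((j : ℕ) < A₀.card ↔ (k : ℕ) < A₀.card) := hij.symm.trans hik
        rw [auxD_same Q s A₀ A₁ i k hik, auxD_same Q s A₀ A₁ i j hij,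
          auxD_same Q s A₀ A₁ j k hjk]
        exact hQmax _ _ _
      · rw [auxD_cross Q s A₀ A₁ i j hij]
        exact le_max_of_le_left (hdlts i k hik).le
    · rw [auxD_cross Q s A₀ A₁ i k hik]
      by_cases hij : ((i : ℕ) < A₀.card ↔ (j : ℕ) < A₀.card)
      · have hjk : ¬ ((j : ℕ) < A₀.card ↔ (k : ℕ) < A₀.card) := fun h => hik (hij.trans h)
        rw [auxD_cross Q s A₀ A₁ j k hjk]
        exact le_max_right _ _
      · rw [auxD_cross Q s A₀ A₁ i j hij]
        exact le_max_left _ _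
  have hd5 : ∀ i j k, i < j → j < k → auxD Q s A₀ A₁ i j ≤ auxD Q s A₀ A₁ i k := by
    intro i j k hij hjk
    have hijn : (i : ℕ) < (j : ℕ) := hij
    have hjkn : (j : ℕ) < (k : ℕ) := hjk
    by_cases hik : ((i : ℕ) < A₀.card ↔ (k : ℕ) < A₀.card)
    · by_cases hi : (i : ℕ) < A₀.card
      · have hk : (k : ℕ) < A₀.card := hik.mp hi
        have hj : (j : ℕ) < A₀.card := by omega
        rw [auxD_same Q s A₀ A₁ i j (iff_of_true hi hj),
          auxD_same Q s A₀ A₁ i k hik, hQle]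
        exact hconv _ _ _ ((auxE_lt_iff₀ A₀ A₁ i j hi hj).mpr hij)
          ((auxE_lt_iff₀ A₀ A₁ j k hj hk).mpr hjk)
      · have hk : ¬ (k : ℕ) < A₀.card := fun h => hi (hik.mpr h)
        have hj : ¬ (j : ℕ) < A₀.card := by omega
        rw [auxD_same Q s A₀ A₁ i j (iff_of_false hi hj),
          auxD_same Q s A₀ A₁ i k hik, hQle]
        exact hconv _ _ _ ((auxE_lt_iff₁ A₀ A₁ i j hi hj).mpr hij)
          ((auxE_lt_iff₁ A₀ A₁ j k hj hk).mpr hjk)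
    · rw [auxD_cross Q s A₀ A₁ i k hik]
      by_cases hij2 : ((i : ℕ) < A₀.card ↔ (j : ℕ) < A₀.card)
      · exact (hdlts i j hij2).le
      · rw [auxD_cross Q s A₀ A₁ i j hij2]
  have hd6 : ∀ (P : Finset (Fin (A₀.card + A₁.card))) (r : ℚ), 0 < r →
      (∀ i ∈ P, ∀ j ∈ P, i ≠ j → auxD Q s A₀ A₁ i j = r) → (P.card : ℕ∞) ≤ N := by
    intro P r hr hP
    by_cases hcard : P.card ≤ 1
    · calc (P.card : ℕ∞) ≤ ((1 : ℕ) : ℕ∞) := by exact_mod_cast hcard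
        _ ≤ 2 := by exact_mod_cast one_le_two
        _ ≤ N := hN
    · obtain ⟨i, hi, j, hj, hij⟩ := Finset.one_lt_card.mp (show 1 < P.card by omega)
      have hrij := hP i hi j hj hij
      by_cases hc : ((i : ℕ) < A₀.card ↔ (j : ℕ) < A₀.card)
      · -- same side : r < s, whole polygon on one side
        have hrs : r < s := by rw [← hrij]; exact hdlts i j hc
        have hside : ∀ x ∈ P, ((x : ℕ) < A₀.card ↔ (i : ℕ) < A₀.card) := by
          intro x hx
          by_cases hxi : x = i
          · rw [hxi]
          · by_contra hcx
            have h1 := hP x hx i hi hxi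
            rw [auxD_cross Q s A₀ A₁ x i hcx] at h1
            rw [h1] at hrs; exact lt_irrefl _ hrs
        have hinj : Set.InjOn (auxE A₀ A₁) ↑P := by
          intro x hx y hy hxy
          exact auxE_inj A₀ A₁ x y ((hside x hx).trans (hside y hy).symm) hxy
        have him : ∀ a ∈ P.image (auxE A₀ A₁), ∀ b ∈ P.image (auxE A₀ A₁),
            a ≠ b → dist a b = ((r : ℚ) : ℝ) := by
          intro a ha b hb hab
          obtain ⟨x, hx, rfl⟩ := Finset.mem_image.mp ha
          obtain ⟨y, hy, rfl⟩ := Finset.mem_image.mp hb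
          have hxy : x ≠ y := fun h => hab (by rw [h])
          have h1 := hP x hx y hy hxy
          rw [auxD_same Q s A₀ A₁ x y ((hside x hx).trans (hside y hy).symm)] at h1
          rw [hQ, h1]
        have h2 := hpoly (P.image (auxE A₀ A₁)) ((r : ℚ) : ℝ) (by exact_mod_cast hr) him
        rwa [Finset.card_image_of_injOn hinj] at h2
      · -- cross : r = s, all pairs cross, at most two points
        have hrs : s = r := by rw [← hrij, auxD_cross Q s A₀ A₁ i j hc]
        have hcross : ∀ x ∈ P, ∀ y ∈ P, x ≠ y →
            ¬ ((x : ℕ) < A₀.card ↔ (y : ℕ) < A₀.card) := by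
          intro x hx y hy hxy hcc
          have h1 := hP x hx y hy hxy
          rw [auxD_same Q s A₀ A₁ x y hcc] at h1
          have h2 := hsA _ (hEA x) _ (hEA y)
          rw [h1, hrs] at h2; exact lt_irrefl _ h2
        have hinj2 : Set.InjOn (fun x : Fin (A₀.card + A₁.card) =>
            decide ((x : ℕ) < A₀.card)) ↑P := by
          intro x hx y hy hxy
          by_contra hne
          exact hcross x hx y hy hne (decide_eq_decide.mp hxy)
        have h3 : P.card ≤ Fintype.card Bool :=
          Finset.card_le_card_of_injOn _ (fun a _ => Finset.mem_univ _) hinj2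
        have h4 : P.card ≤ 2 := by simpa using h3
        calc (P.card : ℕ∞) ≤ ((2 : ℕ) : ℕ∞) := by exact_mod_cast h4
          _ ≤ N := by exact_mod_cast hN
  obtain ⟨f, hfmono, hf⟩ :=
    huniv (A₀.card + A₁.card) (auxD Q s A₀ A₁) hd1 hd2 hd3 hd4 hd5 hd6
  -- extend x ↦ f (index of x) on each side to automorphisms
  have hι₀lt : ∀ (x : X) (hx : x ∈ A₀),
      ((auxI₀ A₀ A₁ ⟨x, hx⟩ : ℕ)) < A₀.card := fun x hx => auxI₀_lt A₀ A₁ _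
  have hι₁ge : ∀ (x : X) (hx : x ∈ A₁),
      ¬ ((auxI₁ A₀ A₁ ⟨x, hx⟩ : ℕ)) < A₀.card := fun x hx => auxI₁_ge A₀ A₁ _
  have heι₀ : ∀ (x : X) (hx : x ∈ A₀), auxE A₀ A₁ (auxI₀ A₀ A₁ ⟨x, hx⟩) = x :=
    fun x hx => auxE_auxI₀ A₀ A₁ _
  have heι₁ : ∀ (x : X) (hx : x ∈ A₁), auxE A₀ A₁ (auxI₁ A₀ A₁ ⟨x, hx⟩) = x :=
    fun x hx => auxE_auxI₁ A₀ A₁ _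
  set g₀ : Finset (X × X) :=
    A₀.attach.image (fun x : {y // y ∈ A₀} => ((x : X), f (auxI₀ A₀ A₁ x))) with hg₀def
  set g₁ : Finset (X × X) :=
    A₁.attach.image (fun x : {y // y ∈ A₁} => ((x : X), f (auxI₁ A₀ A₁ x))) with hg₁def
  have hg₀ : IsPBP g₀ := by
    refine ⟨?_, ?_, ?_⟩
    · intro a ha b hb
      obtain ⟨x, -, rfl⟩ := Finset.mem_image.mp ha
      obtain ⟨y, -, rfl⟩ := Finset.mem_image.mp hb
      dsimp only
      constructor
      · intro h
        obtain rfl : x = y := Subtype.ext h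
        rfl
      · intro h
        have h2 := hfmono.injective h
        rw [← auxE_auxI₀ A₀ A₁ x, ← auxE_auxI₀ A₀ A₁ y, h2]
    · intro a ha b hb
      obtain ⟨x, -, rfl⟩ := Finset.mem_image.mp ha
      obtain ⟨y, -, rfl⟩ := Finset.mem_image.mp hb
      dsimp only
      rw [hfmono.lt_iff_lt, ← auxE_auxI₀ A₀ A₁ x, ← auxE_auxI₀ A₀ A₁ y,
        auxE_lt_iff₀ A₀ A₁ _ _ (auxI₀_lt A₀ A₁ x) (auxI₀_lt A₀ A₁ y)]
    · intro a ha b hb c hc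
      obtain ⟨x, -, rfl⟩ := Finset.mem_image.mp ha
      obtain ⟨y, -, rfl⟩ := Finset.mem_image.mp hb
      obtain ⟨z, -, rfl⟩ := Finset.mem_image.mp hc
      dsimp only
      rw [← hf (auxI₀ A₀ A₁ x) (auxI₀ A₀ A₁ y) (auxI₀ A₀ A₁ z),
        auxD_same Q s A₀ A₁ _ _ (iff_of_true (auxI₀_lt A₀ A₁ x) (auxI₀_lt A₀ A₁ y)),
        auxD_same Q s A₀ A₁ _ _ (iff_of_true (auxI₀_lt A₀ A₁ y) (auxI₀_lt A₀ A₁ z)),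
        auxE_auxI₀ A₀ A₁ x, auxE_auxI₀ A₀ A₁ y, auxE_auxI₀ A₀ A₁ z, hQlt]
  have hg₁ : IsPBP g₁ := by
    refine ⟨?_, ?_, ?_⟩
    · intro a ha b hb
      obtain ⟨x, -, rfl⟩ := Finset.mem_image.mp ha
      obtain ⟨y, -, rfl⟩ := Finset.mem_image.mp hb
      dsimp only
      constructor
      · intro h
        obtain rfl : x = y := Subtype.ext h
        rfl
      · intro h
        have h2 := hfmono.injective h
        rw [← auxE_auxI₁ A₀ A₁ x, ← auxE_auxI₁ A₀ A₁ y, h2]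
    · intro a ha b hb
      obtain ⟨x, -, rfl⟩ := Finset.mem_image.mp ha
      obtain ⟨y, -, rfl⟩ := Finset.mem_image.mp hb
      dsimp only
      rw [hfmono.lt_iff_lt, ← auxE_auxI₁ A₀ A₁ x, ← auxE_auxI₁ A₀ A₁ y,
        auxE_lt_iff₁ A₀ A₁ _ _ (auxI₁_ge A₀ A₁ x) (auxI₁_ge A₀ A₁ y)]
    · intro a ha b hb c hc
      obtain ⟨x, -, rfl⟩ := Finset.mem_image.mp ha
      obtain ⟨y, -, rfl⟩ := Finset.mem_image.mp hb
      obtain ⟨z, -, rfl⟩ := Finset.mem_image.mp hc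
      dsimp only
      rw [← hf (auxI₁ A₀ A₁ x) (auxI₁ A₀ A₁ y) (auxI₁ A₀ A₁ z),
        auxD_same Q s A₀ A₁ _ _ (iff_of_false (auxI₁_ge A₀ A₁ x) (auxI₁_ge A₀ A₁ y)),
        auxD_same Q s A₀ A₁ _ _ (iff_of_false (auxI₁_ge A₀ A₁ y) (auxI₁_ge A₀ A₁ z)),
        auxE_auxI₁ A₀ A₁ x, auxE_auxI₁ A₀ A₁ y, auxE_auxI₁ A₀ A₁ z, hQlt]
  obtain ⟨Φ₀, hΦ₀op, hΦ₀⟩ := hhom g₀ hg₀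
  obtain ⟨Φ₁, hΦ₁op, hΦ₁⟩ := hhom g₁ hg₁
  have hΦ₀x : ∀ (x : X) (hx : x ∈ A₀), Φ₀ x = f (auxI₀ A₀ A₁ ⟨x, hx⟩) := by
    intro x hx
    exact hΦ₀ _ (Finset.mem_image.mpr ⟨⟨x, hx⟩, Finset.mem_attach _ _, rfl⟩)
  have hΦ₁x : ∀ (x : X) (hx : x ∈ A₁), Φ₁ x = f (auxI₁ A₀ A₁ ⟨x, hx⟩) := by
    intro x hx
    exact hΦ₁ _ (Finset.mem_image.mpr ⟨⟨x, hx⟩, Finset.mem_attach _ _, rfl⟩)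
  set r : Finset (X × X) :=
    p₀.image (fun a => (Φ₀ a.1, Φ₀ a.2)) ∪ p₁.image (fun a => (Φ₁ a.1, Φ₁ a.2)) with hrdef
  -- representation of elements of r
  have hrep : ∀ t ∈ r, ∃ (a : X × X) (i i' : Fin (A₀.card + A₁.card)),
      t = (f i, f i') ∧ auxE A₀ A₁ i = a.1 ∧ auxE A₀ A₁ i' = a.2 ∧
      (((i : ℕ) < A₀.card ∧ (i' : ℕ) < A₀.card ∧ a ∈ p₀) ∨
        (¬ (i : ℕ) < A₀.card ∧ ¬ (i' : ℕ) < A₀.card ∧ a ∈ p₁)) := by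
    intro t ht
    rcases Finset.mem_union.mp ht with h | h
    · obtain ⟨a, ha, rfl⟩ := Finset.mem_image.mp h
      obtain ⟨h1, h2⟩ := hmemA₀ a ha
      exact ⟨a, auxI₀ A₀ A₁ ⟨a.1, h1⟩, auxI₀ A₀ A₁ ⟨a.2, h2⟩,
        by rw [hΦ₀x a.1 h1, hΦ₀x a.2 h2], heι₀ a.1 h1, heι₀ a.2 h2,
        Or.inl ⟨hι₀lt a.1 h1, hι₀lt a.2 h2, ha⟩⟩
    · obtain ⟨a, ha, rfl⟩ := Finset.mem_image.mp h
      obtain ⟨h1, h2⟩ := hmemA₁ a ha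
      exact ⟨a, auxI₁ A₀ A₁ ⟨a.1, h1⟩, auxI₁ A₀ A₁ ⟨a.2, h2⟩,
        by rw [hΦ₁x a.1 h1, hΦ₁x a.2 h2], heι₁ a.1 h1, heι₁ a.2 h2,
        Or.inr ⟨hι₁ge a.1 h1, hι₁ge a.2 h2, ha⟩⟩
  -- helpers for the case analysis
  have hkey_eq : ∀ (i j : Fin (A₀.card + A₁.card)) (x y : X),
      ((i : ℕ) < A₀.card ↔ (j : ℕ) < A₀.card) →
      auxE A₀ A₁ i = x → auxE A₀ A₁ j = y → (i = j ↔ x = y) := by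
    intro i j x y hc hx hy
    subst hx; subst hy
    exact ⟨fun h => by rw [h], auxE_inj A₀ A₁ i j hc⟩
  have hkey_lt₀ : ∀ (i j : Fin (A₀.card + A₁.card)) (x y : X),
      (i : ℕ) < A₀.card → (j : ℕ) < A₀.card →
      auxE A₀ A₁ i = x → auxE A₀ A₁ j = y → (i < j ↔ x < y) := by
    intro i j x y hi hj hx hy
    subst hx; subst hy
    exact (auxE_lt_iff₀ A₀ A₁ i j hi hj).symm
  have hkey_lt₁ : ∀ (i j : Fin (A₀.card + A₁.card)) (x y : X),
      ¬ (i : ℕ) < A₀.card → ¬ (j : ℕ) < A₀.card →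
      auxE A₀ A₁ i = x → auxE A₀ A₁ j = y → (i < j ↔ x < y) := by
    intro i j x y hi hj hx hy
    subst hx; subst hy
    exact (auxE_lt_iff₁ A₀ A₁ i j hi hj).symm
  have hdQ : ∀ (i j : Fin (A₀.card + A₁.card)) (x y : X),
      ((i : ℕ) < A₀.card ↔ (j : ℕ) < A₀.card) →
      auxE A₀ A₁ i = x → auxE A₀ A₁ j = y → auxD Q s A₀ A₁ i j = Q x y := by
    intro i j x y hc hx hy
    rw [auxD_same Q s A₀ A₁ i j hc, hx, hy]
  have hA₀A : ∀ x ∈ A₀, x ∈ A := fun x hx => Finset.mem_union_left _ hx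
  have hA₁A : ∀ x ∈ A₁, x ∈ A := fun x hx => Finset.mem_union_right _ hx
  have hr_pbp : IsPBP r := by
    refine ⟨?_, ?_, ?_⟩
    · intro t ht u hu
      obtain ⟨a, ia, ia', hta, hea, hea', hoa⟩ := hrep t ht
      obtain ⟨b, ib, ib', htb, heb, heb', hob⟩ := hrep u hu
      rw [hta, htb]
      dsimp only
      rw [hfmono.injective.eq_iff, hfmono.injective.eq_iff]
      rcases hoa with ⟨ha1, ha2, hap⟩ | ⟨ha1, ha2, hap⟩ <;>
        rcases hob with ⟨hb1, hb2, hbp⟩ | ⟨hb1, hb2, hbp⟩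
      · rw [hkey_eq ia ib a.1 b.1 (iff_of_true ha1 hb1) hea heb,
          hkey_eq ia' ib' a.2 b.2 (iff_of_true ha2 hb2) hea' heb']
        exact hp₀.1 a hap b hbp
      · exact iff_of_false (fun h => hb1 (h ▸ ha1)) (fun h => hb2 (h ▸ ha2))
      · exact iff_of_false (fun h => ha1 (h ▸ hb1)) (fun h => ha2 (h ▸ hb2))
      · rw [hkey_eq ia ib a.1 b.1 (iff_of_false ha1 hb1) hea heb,
          hkey_eq ia' ib' a.2 b.2 (iff_of_false ha2 hb2) hea' heb']
        exact hp₁.1 a hap b hbp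
    · intro t ht u hu
      obtain ⟨a, ia, ia', hta, hea, hea', hoa⟩ := hrep t ht
      obtain ⟨b, ib, ib', htb, heb, heb', hob⟩ := hrep u hu
      rw [hta, htb]
      dsimp only
      rw [hfmono.lt_iff_lt, hfmono.lt_iff_lt]
      rcases hoa with ⟨ha1, ha2, hap⟩ | ⟨ha1, ha2, hap⟩ <;>
        rcases hob with ⟨hb1, hb2, hbp⟩ | ⟨hb1, hb2, hbp⟩
      · rw [hkey_lt₀ ia ib a.1 b.1 ha1 hb1 hea heb,
          hkey_lt₀ ia' ib' a.2 b.2 ha2 hb2 hea' heb']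
        exact hp₀.2.1 a hap b hbp
      · exact iff_of_true (by rw [Fin.lt_def]; omega) (by rw [Fin.lt_def]; omega)
      · exact iff_of_false (by rw [Fin.lt_def]; omega) (by rw [Fin.lt_def]; omega)
      · rw [hkey_lt₁ ia ib a.1 b.1 ha1 hb1 hea heb,
          hkey_lt₁ ia' ib' a.2 b.2 ha2 hb2 hea' heb']
        exact hp₁.2.1 a hap b hbp
    · intro t ht u hu v hv
      obtain ⟨a, ia, ia', hta, hea, hea', hoa⟩ := hrep t ht
      obtain ⟨b, ib, ib', htb, heb, heb', hob⟩ := hrep u hu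
      obtain ⟨c, ic, ic', htc, hec, hec', hoc⟩ := hrep v hv
      rw [hta, htb, htc]
      dsimp only
      rw [← hf ia ib ic, ← hf ia' ib' ic']
      rcases hoa with ⟨ha1, ha2, hap⟩ | ⟨ha1, ha2, hap⟩ <;>
        rcases hob with ⟨hb1, hb2, hbp⟩ | ⟨hb1, hb2, hbp⟩ <;>
          rcases hoc with ⟨hc1, hc2, hcp⟩ | ⟨hc1, hc2, hcp⟩
      · -- 000
        rw [hdQ ia ib a.1 b.1 (iff_of_true ha1 hb1) hea heb,
          hdQ ib ic b.1 c.1 (iff_of_true hb1 hc1) heb hec,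
          hdQ ia' ib' a.2 b.2 (iff_of_true ha2 hb2) hea' heb',
          hdQ ib' ic' b.2 c.2 (iff_of_true hb2 hc2) heb' hec',
          hQlt, hQlt]
        exact hp₀.2.2 a hap b hbp c hcp
      · -- 001
        rw [hdQ ia ib a.1 b.1 (iff_of_true ha1 hb1) hea heb,
          auxD_cross Q s A₀ A₁ ib ic (fun h => hc1 (h.mp hb1)),
          hdQ ia' ib' a.2 b.2 (iff_of_true ha2 hb2) hea' heb',
          auxD_cross Q s A₀ A₁ ib' ic' (fun h => hc2 (h.mp hb2))]
        exact iff_of_true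
          (hsA _ (hA₀A _ (hmemA₀ a hap).1) _ (hA₀A _ (hmemA₀ b hbp).1))
          (hsA _ (hA₀A _ (hmemA₀ a hap).2) _ (hA₀A _ (hmemA₀ b hbp).2))
      · -- 010
        rw [auxD_cross Q s A₀ A₁ ia ib (fun h => hb1 (h.mp ha1)),
          auxD_cross Q s A₀ A₁ ib ic (fun h => hb1 (h.mpr hc1)),
          auxD_cross Q s A₀ A₁ ia' ib' (fun h => hb2 (h.mp ha2)),
          auxD_cross Q s A₀ A₁ ib' ic' (fun h => hb2 (h.mpr hc2))]
      · -- 011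
        rw [auxD_cross Q s A₀ A₁ ia ib (fun h => hb1 (h.mp ha1)),
          hdQ ib ic b.1 c.1 (iff_of_false hb1 hc1) heb hec,
          auxD_cross Q s A₀ A₁ ia' ib' (fun h => hb2 (h.mp ha2)),
          hdQ ib' ic' b.2 c.2 (iff_of_false hb2 hc2) heb' hec']
        exact iff_of_false
          (not_lt.mpr (hsA _ (hA₁A _ (hmemA₁ b hbp).1) _ (hA₁A _ (hmemA₁ c hcp).1)).le)
          (not_lt.mpr (hsA _ (hA₁A _ (hmemA₁ b hbp).2) _ (hA₁A _ (hmemA₁ c hcp).2)).le)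
      · -- 100
        rw [auxD_cross Q s A₀ A₁ ia ib (fun h => ha1 (h.mpr hb1)),
          hdQ ib ic b.1 c.1 (iff_of_true hb1 hc1) heb hec,
          auxD_cross Q s A₀ A₁ ia' ib' (fun h => ha2 (h.mpr hb2)),
          hdQ ib' ic' b.2 c.2 (iff_of_true hb2 hc2) heb' hec']
        exact iff_of_false
          (not_lt.mpr (hsA _ (hA₀A _ (hmemA₀ b hbp).1) _ (hA₀A _ (hmemA₀ c hcp).1)).le)
          (not_lt.mpr (hsA _ (hA₀A _ (hmemA₀ b hbp).2) _ (hA₀A _ (hmemA₀ c hcp).2)).le)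
      · -- 101
        rw [auxD_cross Q s A₀ A₁ ia ib (fun h => ha1 (h.mpr hb1)),
          auxD_cross Q s A₀ A₁ ib ic (fun h => hc1 (h.mp hb1)),
          auxD_cross Q s A₀ A₁ ia' ib' (fun h => ha2 (h.mpr hb2)),
          auxD_cross Q s A₀ A₁ ib' ic' (fun h => hc2 (h.mp hb2))]
      · -- 110
        rw [hdQ ia ib a.1 b.1 (iff_of_false ha1 hb1) hea heb,
          auxD_cross Q s A₀ A₁ ib ic (fun h => hb1 (h.mpr hc1)),
          hdQ ia' ib' a.2 b.2 (iff_of_false ha2 hb2) hea' heb',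
          auxD_cross Q s A₀ A₁ ib' ic' (fun h => hb2 (h.mpr hc2))]
        exact iff_of_true
          (hsA _ (hA₁A _ (hmemA₁ a hap).1) _ (hA₁A _ (hmemA₁ b hbp).1))
          (hsA _ (hA₁A _ (hmemA₁ a hap).2) _ (hA₁A _ (hmemA₁ b hbp).2))
      · -- 111
        rw [hdQ ia ib a.1 b.1 (iff_of_false ha1 hb1) hea heb,
          hdQ ib ic b.1 c.1 (iff_of_false hb1 hc1) heb hec,
          hdQ ia' ib' a.2 b.2 (iff_of_false ha2 hb2) hea' heb',
          hdQ ib' ic' b.2 c.2 (iff_of_false hb2 hc2) heb' hec',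
          hQlt, hQlt]
        exact hp₁.2.2 a hap b hbp c hcp
  -- description of zdef sets
  have hz₀ : zdefF p₀ = (A₀ : Set X) := by
    ext x
    rw [hA₀def]
    simp only [zdefF, Set.mem_setOf_eq, Finset.coe_union, Set.mem_union,
      Finset.mem_coe, Finset.mem_image]
    constructor
    · rintro (⟨y, h⟩ | ⟨y, h⟩)
      · exact Or.inl ⟨(x, y), h, rfl⟩
      · exact Or.inr ⟨(y, x), h, rfl⟩
    · rintro (⟨a, ha, h⟩ | ⟨a, ha, h⟩)
      · exact Or.inl ⟨a.2, by rw [← h]; exact ha⟩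
      · exact Or.inr ⟨a.1, by rw [← h]; exact ha⟩
  have hz₁ : zdefF p₁ = (A₁ : Set X) := by
    ext x
    rw [hA₁def]
    simp only [zdefF, Set.mem_setOf_eq, Finset.coe_union, Set.mem_union,
      Finset.mem_coe, Finset.mem_image]
    constructor
    · rintro (⟨y, h⟩ | ⟨y, h⟩)
      · exact Or.inl ⟨(x, y), h, rfl⟩
      · exact Or.inr ⟨(y, x), h, rfl⟩
    · rintro (⟨a, ha, h⟩ | ⟨a, ha, h⟩)
      · exact Or.inl ⟨a.2, by rw [← h]; exact ha⟩
      · exact Or.inr ⟨a.1, by rw [← h]; exact ha⟩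
  refine ⟨r, hr_pbp, Φ₀, Φ₁,
    ⟨hΦ₀op, fun a ha => Finset.mem_union_left _ (Finset.mem_image_of_mem _ ha)⟩,
    ⟨hΦ₁op, fun a ha => Finset.mem_union_right _ (Finset.mem_image_of_mem _ ha)⟩, ?_⟩
  rw [hz₀, hz₁, Set.disjoint_left]
  rintro z ⟨x, hx, rfl⟩ ⟨y, hy, hxy⟩
  rw [Finset.mem_coe] at hx hy
  rw [hΦ₀x x hx, hΦ₁x y hy] at hxy
  have h2 := hfmono.injective hxy
  have h3 := hι₀lt x hx
  rw [← h2] at h3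
  exact hι₁ge y hy h3

end BPUry
end
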